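/- arXiv:1901.01625 — 4 statements merged into one kernel-verified Lean document; each statement's English description precedes it below -/
import Mathlib

section
/- For every real y > 0, ∫_0^y (1 − e^{−w})/w dw = γ + log y + ∫_y^∞ (e^{−w}/w) dw, where γ is the Euler–Mascheroni constant. In particular, taking y = 1 gives γ = ∫_0^1 (1 − e^{−w})/w dw − ∫_1^∞ (e^{−w}/w) dw. -/
/-!
Since `Γ'(1) = -γ`, differentiating the Gamma integral gives `γ = -∫₀^∞ e^{-t} log t dt`.
Split this integral at `y` and integrate by parts on both pieces, taking `1 - e^{-t}` as the
antiderivative of `e^{-t}` on `(0, y]` (it vanishes at `0` fast enough to absorb the logarithmic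
singularity) and `-e^{-t}` on `(y, ∞)`. The boundary terms add up to `log y`.
-/

open Real MeasureTheory Set Filter Topology

lemma one_sub_exp_neg_le (t : ℝ) : 1 - exp (-t) ≤ t := by
  linarith [add_one_le_exp (-t)]

lemma one_sub_exp_neg_nonneg {t : ℝ} (ht : 0 ≤ t) : 0 ≤ 1 - exp (-t) := by
  linarith [exp_le_one_iff.2 (neg_nonpos.2 ht)]

lemma norm_log_mul_exp_neg_le {t : ℝ} (ht : 1 ≤ t) :
    ‖log t * exp (-t)‖ ≤ t * exp (-t) := by
  rw [norm_mul, norm_of_nonneg (log_nonneg ht), norm_of_nonneg (exp_pos _).le]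
  gcongr
  exact (log_le_sub_one_of_pos (by linarith)).trans (by linarith)

lemma integrableOn_Ioi_zero_log_mul_exp_neg :
    IntegrableOn (fun t => log t * exp (-t)) (Ioi 0) := by
  rw [← Ioc_union_Ioi_eq_Ioi zero_le_one]
  refine IntegrableOn.union ?_ ?_
  · refine (intervalIntegral.intervalIntegrable_log' (a := 0) (b := 1)).1.mul_bdd (c := 1)
      (by fun_prop) ?_
    filter_upwards [ae_restrict_mem measurableSet_Ioc] with t ht
    rw [norm_of_nonneg (exp_pos _).le, exp_le_one_iff]
    linarith [ht.1]
  · refine ((integrableOn_rpow_mul_exp_neg_rpow (s := 1) (p := 1) (by norm_num) one_pos).mono_set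
      (Ioi_subset_Ioi zero_le_one)).mono' (by fun_prop) ?_
    filter_upwards [ae_restrict_mem measurableSet_Ioi] with t (ht : 1 < t)
    simpa only [rpow_one] using norm_log_mul_exp_neg_le ht.le

lemma integrableOn_Ioc_zero_one_sub_exp_neg_div (y : ℝ) :
    IntegrableOn (fun t => (1 - exp (-t)) / t) (Ioc 0 y) := by
  refine (integrableOn_const measure_Ioc_lt_top.ne (C := (1 : ℝ))).mono'
    (by fun_prop : Measurable fun t : ℝ => (1 - exp (-t)) / t).aestronglyMeasurable ?_
  filter_upwards [ae_restrict_mem measurableSet_Ioc] with t ht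
  rw [norm_div, norm_of_nonneg (one_sub_exp_neg_nonneg ht.1.le), norm_of_nonneg ht.1.le,
    div_le_one ht.1]
  exact one_sub_exp_neg_le t

lemma integrableOn_Ioi_exp_neg_div {y : ℝ} (hy : 0 < y) :
    IntegrableOn (fun t => exp (-t) / t) (Ioi y) := by
  refine ((exp_neg_integrableOn_Ioi y one_pos).div_const y).mono'
    (by fun_prop : Measurable fun t : ℝ => exp (-t) / t).aestronglyMeasurable ?_
  filter_upwards [ae_restrict_mem measurableSet_Ioi] with t (ht : y < t)
  rw [norm_div, norm_of_nonneg (exp_pos _).le, norm_of_nonneg (hy.trans ht).le, neg_one_mul]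
  gcongr

theorem integral_Ioi_zero_log_mul_exp_neg :
    ∫ t in Ioi 0, log t * exp (-t) = -eulerMascheroniConstant := by
  have hGamma : Complex.GammaIntegral =ᶠ[𝓝 1] Complex.Gamma := by
    filter_upwards [(isOpen_lt continuous_const Complex.continuous_re).mem_nhds
      (by norm_num : (0 : ℝ) < (1 : ℂ).re)] with s hs
    exact (Complex.Gamma_eq_integral hs).symm
  have h := ((Complex.hasDerivAt_GammaIntegral (by norm_num)).congr_of_eventuallyEq
    hGamma.symm).unique Complex.hasDerivAt_Gamma_one
  simp only [sub_self, Complex.cpow_zero, one_mul, ← Complex.ofReal_mul] at h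
  exact_mod_cast h

lemma continuousOn_one_sub_exp_neg_mul_log :
    ContinuousOn (fun t => (1 - exp (-t)) * log t) (Ici 0) := by
  intro t ht
  rcases (mem_Ici.1 ht).eq_or_lt with rfl | ht
  · have hlim : Tendsto (fun t => t * log t) (𝓝[Ici 0] 0) (𝓝 0) := by
      simpa using (continuous_mul_log.tendsto 0).mono_left nhdsWithin_le_nhds
    show Tendsto _ _ (𝓝 ((1 - exp (-0)) * log 0))
    rw [log_zero, mul_zero]
    refine squeeze_zero_norm' (a := fun t => ‖t * log t‖) ?_ (by simpa using hlim.norm)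
    filter_upwards [self_mem_nhdsWithin] with t (ht : 0 ≤ t)
    rw [norm_mul, norm_mul, norm_of_nonneg (one_sub_exp_neg_nonneg ht), norm_of_nonneg ht]
    gcongr
    exact one_sub_exp_neg_le t
  · exact (ContinuousAt.mul (by fun_prop) (continuousAt_log ht.ne')).continuousWithinAt

lemma hasDerivAt_one_sub_exp_neg_mul_log {t : ℝ} (ht : t ≠ 0) :
    HasDerivAt (fun t => (1 - exp (-t)) * log t) (log t * exp (-t) + (1 - exp (-t)) / t) t :=
  ((((hasDerivAt_neg t).exp).const_sub 1).fun_mul (hasDerivAt_log ht)).congr_deriv (by ring)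

lemma hasDerivAt_neg_exp_neg_mul_log {t : ℝ} (ht : t ≠ 0) :
    HasDerivAt (fun t => -(exp (-t) * log t)) (log t * exp (-t) - exp (-t) / t) t :=
  (((hasDerivAt_neg t).exp).fun_mul (hasDerivAt_log ht)).neg.congr_deriv (by ring)

lemma integral_Ioc_zero_log_mul_exp_neg {y : ℝ} (hy : 0 < y) :
    ∫ t in Ioc 0 y, log t * exp (-t)
      = (1 - exp (-y)) * log y - ∫ t in 0..y, (1 - exp (-t)) / t := by
  have h₁ : IntervalIntegrable (fun t => log t * exp (-t)) volume 0 y :=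
    (intervalIntegrable_iff_integrableOn_Ioc_of_le hy.le).2
      (integrableOn_Ioi_zero_log_mul_exp_neg.mono_set Ioc_subset_Ioi_self)
  have h₂ : IntervalIntegrable (fun t => (1 - exp (-t)) / t) volume 0 y :=
    (intervalIntegrable_iff_integrableOn_Ioc_of_le hy.le).2
      (integrableOn_Ioc_zero_one_sub_exp_neg_div y)
  have hFTC := intervalIntegral.integral_eq_sub_of_hasDerivAt_of_le hy.le
    (continuousOn_one_sub_exp_neg_mul_log.mono Icc_subset_Ici_self)
    (fun t ht => hasDerivAt_one_sub_exp_neg_mul_log ht.1.ne') (h₁.add h₂)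
  rw [intervalIntegral.integral_add h₁ h₂, intervalIntegral.integral_of_le hy.le] at hFTC
  simp only [log_zero, mul_zero, sub_zero] at hFTC
  linarith

lemma integral_Ioi_log_mul_exp_neg {y : ℝ} (hy : 0 < y) :
    ∫ t in Ioi y, log t * exp (-t) = exp (-y) * log y + ∫ t in Ioi y, exp (-t) / t := by
  have h₁ := integrableOn_Ioi_zero_log_mul_exp_neg.mono_set (Ioi_subset_Ioi hy.le)
  have h₂ := integrableOn_Ioi_exp_neg_div hy
  have hlim : Tendsto (fun t => -(exp (-t) * log t)) atTop (𝓝 0) := by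
    refine squeeze_zero_norm' ?_ (by simpa using tendsto_pow_mul_exp_neg_atTop_nhds_zero 1)
    filter_upwards [eventually_ge_atTop 1] with t ht
    rw [norm_neg, mul_comm]
    exact norm_log_mul_exp_neg_le ht
  have hFTC := integral_Ioi_of_hasDerivAt_of_tendsto'
    (fun t ht => hasDerivAt_neg_exp_neg_mul_log (hy.trans_le ht).ne') (h₁.sub h₂) hlim
  rw [integral_sub h₁ h₂] at hFTC
  linarith

/-- **An integral identity for the Euler–Mascheroni constant.**
For every real `y > 0`, `∫_0^y (1 − e^{−w})/w dw = γ + log y + ∫_y^∞ (e^{−w}/w) dw`, where `γ` is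
the Euler–Mascheroni constant.  In particular, taking `y = 1`,
`γ = ∫_0^1 (1 − e^{−w})/w dw − ∫_1^∞ (e^{−w}/w) dw`. -/
theorem eulerMascheroni_integral_identity :
    (∀ y : ℝ, 0 < y →
      ∫ w in (0 : ℝ)..y, (1 - Real.exp (-w)) / w
        = Real.eulerMascheroniConstant + Real.log y
            + ∫ w in Set.Ioi y, Real.exp (-w) / w)
    ∧ Real.eulerMascheroniConstant
        = (∫ w in (0 : ℝ)..1, (1 - Real.exp (-w)) / w)
            - ∫ w in Set.Ioi (1 : ℝ), Real.exp (-w) / w := by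
  have hident : ∀ y : ℝ, 0 < y →
      ∫ w in (0 : ℝ)..y, (1 - exp (-w)) / w
        = eulerMascheroniConstant + log y + ∫ w in Ioi y, exp (-w) / w := by
    intro y hy
    have hsplit := setIntegral_union (Ioc_disjoint_Ioi le_rfl) measurableSet_Ioi
      (integrableOn_Ioi_zero_log_mul_exp_neg.mono_set Ioc_subset_Ioi_self)
      (integrableOn_Ioi_zero_log_mul_exp_neg.mono_set (Ioi_subset_Ioi hy.le))
    rw [Ioc_union_Ioi_eq_Ioi hy.le, integral_Ioi_zero_log_mul_exp_neg,
      integral_Ioc_zero_log_mul_exp_neg hy, integral_Ioi_log_mul_exp_neg hy] at hsplit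
    linear_combination hsplit
  exact ⟨hident, by linarith [hident 1 one_pos, log_one]⟩
end

section
/- For every real a ≥ 0, ∫_{−π}^{π} θ · exp(a e^{iθ}) dθ = −2πi ∫_0^a ((e^{−w} − 1)/w) dw. -/
/-!
Expanding `exp (a e^{iθ}) = ∑ aⁿ e^{inθ} / n!` and integrating term by term, with
`∫_{-π}^{π} θ e^{inθ} dθ = -2πi (-1)ⁿ / n` for `n ≥ 1` and `0` for `n = 0`, the left side is
`-2πi ∑_{n ≥ 1} (-a)ⁿ / (n · n!)`. Expanding `(e^{-w} - 1) / w = -∑ (-w)ⁿ / (n + 1)!` and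
integrating term by term gives the same series for `∫_0^a (e^{-w} - 1) / w dw`. Both termwise
integrations are justified by the bounds `π |a|ⁿ / n!` and `|a|ⁿ / n!` on the terms.
-/

open MeasureTheory Set Nat Complex
open scoped Real Interval

theorem hasSum_intervalIntegral_of_summable_bound {ι E : Type*} [Countable ι]
    [NormedAddCommGroup E] [NormedSpace ℝ E] {μ : Measure ℝ} [IsLocallyFiniteMeasure μ]
    {a b : ℝ} {F : ι → ℝ → E} {f : ℝ → E} {C : ι → ℝ}
    (hF : ∀ n, AEStronglyMeasurable (F n) (μ.restrict (Ι a b))) (hC : Summable C)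
    (hFC : ∀ n, ∀ t ∈ Ι a b, ‖F n t‖ ≤ C n)
    (hf : ∀ᵐ t ∂μ, t ∈ Ι a b → HasSum (fun n ↦ F n t) (f t)) :
    HasSum (fun n ↦ ∫ t in a..b, F n t ∂μ) (∫ t in a..b, f t ∂μ) :=
  intervalIntegral.hasSum_integral_of_dominated_convergence (fun n _ ↦ C n) hF
    (fun n ↦ ae_of_all _ (hFC n)) (ae_of_all _ fun _ _ ↦ hC) intervalIntegrable_const hf

theorem integral_ofReal_mul_cexp_mul {c : ℂ} (hc : c ≠ 0) (a b : ℝ) :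
    ∫ t in a..b, (t : ℂ) * cexp (c * t)
      = (b / c - 1 / c ^ 2) * cexp (c * b) - (a / c - 1 / c ^ 2) * cexp (c * a) := by
  have hderiv (t : ℝ) :
      HasDerivAt (fun s : ℝ ↦ ((s : ℂ) / c - 1 / c ^ 2) * cexp (c * s)) (t * cexp (c * t)) t := by
    have hs : HasDerivAt (fun s : ℝ ↦ (s : ℂ)) 1 t := hasDerivAt_id t |>.ofReal_comp
    refine (((hs.div_const c).sub_const (1 / c ^ 2)).mul (hs.const_mul c).cexp).congr_deriv ?_
    field_simp
    ring
  exact intervalIntegral.integral_eq_sub_of_hasDerivAt (fun t _ ↦ hderiv t)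
    ((by fun_prop : Continuous fun t : ℝ ↦ (t : ℂ) * cexp (c * t)).intervalIntegrable _ _)

theorem integral_ofReal_mul_cexp_nat_mul_I {n : ℕ} (hn : n ≠ 0) :
    ∫ θ in (-π)..π, (θ : ℂ) * cexp (n * I * θ) = -2 * π * I * (-1) ^ n / n := by
  have hnI : (n : ℂ) * I ≠ 0 := mul_ne_zero (Nat.cast_ne_zero.mpr hn) I_ne_zero
  have hexp_pi : cexp (n * I * π) = (-1) ^ n := by
    rw [mul_assoc, mul_comm I, Complex.exp_nat_mul, exp_pi_mul_I]
  have hexp_neg_pi : cexp (n * I * -π) = (-1) ^ n := by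
    rw [mul_neg, exp_neg, hexp_pi, ← inv_pow, inv_neg_one]
  rw [integral_ofReal_mul_cexp_mul hnI, ofReal_neg, hexp_pi, hexp_neg_pi]
  field_simp
  linear_combination (2 * π * n * I : ℂ) * I_sq

theorem hasSum_pow_div_factorial_cexp (z : ℂ) : HasSum (fun n ↦ z ^ n / n !) (cexp z) :=
  exp_eq_exp_ℂ ▸ NormedSpace.expSeries_div_hasSum_exp z

theorem integral_ofReal_mul_pow_div_factorial {n : ℕ} (hn : n ≠ 0) (a : ℝ) :
    ∫ θ in (-π)..π, (θ : ℂ) * ((a * cexp (θ * I)) ^ n / n !)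
      = -2 * π * I * (((-a) ^ n / (n * n !) : ℝ) : ℂ) := by
  have hterm : ∀ θ : ℝ, (θ : ℂ) * ((a * cexp (θ * I)) ^ n / n !)
      = (a ^ n / n ! : ℂ) * ((θ : ℂ) * cexp (n * I * θ)) := by
    intro θ
    rw [mul_pow, ← Complex.exp_nat_mul]
    ring_nf
  simp only [hterm, intervalIntegral.integral_const_mul, integral_ofReal_mul_cexp_nat_mul_I hn]
  push_cast
  field_simp
  ring

theorem norm_ofReal_mul_pow_div_factorial_le {θ : ℝ} (hθ : |θ| ≤ π) (a : ℝ) (n : ℕ) :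
    ‖(θ : ℂ) * ((a * cexp (θ * I)) ^ n / n !)‖ ≤ π * (|a| ^ n / n !) := by
  rw [norm_mul, norm_div, norm_pow, norm_mul, norm_exp_ofReal_mul_I, mul_one, norm_real,
    norm_real, norm_natCast, Real.norm_eq_abs, Real.norm_eq_abs]
  gcongr

theorem hasSum_integral_ofReal_mul_cexp_mul_cexp (a : ℝ) :
    HasSum (fun n : ℕ ↦ -2 * π * I * (((-a) ^ (n + 1) / ((n + 1) * (n + 1)!) : ℝ) : ℂ))
      (∫ θ in (-π)..π, (θ : ℂ) * cexp (a * cexp (θ * I))) := by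
  have hpi : -π ≤ π := by linarith [Real.pi_pos]
  have hseries := hasSum_intervalIntegral_of_summable_bound (μ := volume)
    (F := fun n θ ↦ (θ : ℂ) * ((a * cexp (θ * I)) ^ n / n !))
    (fun n ↦ by fun_prop) ((Real.summable_pow_div_factorial |a|).mul_left π)
    (fun n θ hθ ↦ by
      rw [uIoc_of_le hpi] at hθ
      exact norm_ofReal_mul_pow_div_factorial_le (abs_le.mpr ⟨hθ.1.le, hθ.2⟩) a n)
    (ae_of_all _ fun θ _ ↦ (hasSum_pow_div_factorial_cexp _).mul_left (θ : ℂ))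
  have hzero : ∫ θ in (-π)..π, (θ : ℂ) = 0 := by
    rw [intervalIntegral.integral_ofReal, integral_id]
    simp
  rw [← hasSum_nat_add_iff' 1] at hseries
  simpa [hzero, integral_ofReal_mul_pow_div_factorial] using hseries

theorem hasSum_pow_div_factorial_succ_exp_sub_one_div {x : ℝ} (hx : x ≠ 0) :
    HasSum (fun n : ℕ ↦ x ^ n / (n + 1)!) ((Real.exp x - 1) / x) := by
  have h := (hasSum_nat_add_iff' 1).mpr
    (Real.exp_eq_exp_ℝ ▸ NormedSpace.expSeries_div_hasSum_exp x)
  simp only [Finset.sum_range_one, pow_zero, factorial_zero, cast_one, div_one] at h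
  refine (h.div_const x).congr_fun fun n ↦ ?_
  rw [pow_succ]
  field_simp

theorem integral_neg_pow_div_factorial_succ (a : ℝ) (n : ℕ) :
    ∫ w in (0 : ℝ)..a, -((-w) ^ n / (n + 1)!) = (-a) ^ (n + 1) / ((n + 1) * (n + 1)!) := by
  rw [intervalIntegral.integral_neg, intervalIntegral.integral_div,
    intervalIntegral.integral_comp_neg fun w ↦ w ^ n, integral_pow]
  field_simp
  ring

theorem hasSum_integral_exp_neg_sub_one_div (a : ℝ) :
    HasSum (fun n : ℕ ↦ (-a) ^ (n + 1) / ((n + 1) * (n + 1)!))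
      (∫ w in (0 : ℝ)..a, (Real.exp (-w) - 1) / w) := by
  have hbound : ∀ n : ℕ, ∀ w ∈ Ι 0 a, ‖-((-w) ^ n / (n + 1)!)‖ ≤ |a| ^ n / n ! := by
    intro n w hw
    have hwa : |w| ≤ |a| := by simpa using abs_sub_left_of_mem_uIcc (uIoc_subset_uIcc hw)
    rw [norm_neg, norm_div, norm_pow, norm_neg, Real.norm_eq_abs, Real.norm_natCast]
    gcongr
    exact le_succ n
  have hpointwise : ∀ᵐ w, w ∈ Ι 0 a →
      HasSum (fun n : ℕ ↦ -((-w) ^ n / (n + 1)!)) ((Real.exp (-w) - 1) / w) := by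
    -- the series sums to `1` at `w = 0`, where the integrand takes the junk value `0`
    filter_upwards [volume.ae_ne 0] with w hw _
    have h := (hasSum_pow_div_factorial_succ_exp_sub_one_div (neg_ne_zero.mpr hw)).neg
    rwa [div_neg, neg_neg] at h
  simpa only [integral_neg_pow_div_factorial_succ] using
    hasSum_intervalIntegral_of_summable_bound (fun n ↦ by fun_prop)
      (Real.summable_pow_div_factorial |a|) hbound hpointwise

theorem integral_theta_mul_exp_mul_exp_I_general (a : ℝ) :
    ∫ θ in (-Real.pi)..Real.pi, (θ : ℂ) * Complex.exp ((a : ℂ) * Complex.exp (θ * Complex.I))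
      = -2 * (Real.pi : ℂ) * Complex.I *
          ((∫ w in (0 : ℝ)..a, (Real.exp (-w) - 1) / w : ℝ) : ℂ) :=
  (hasSum_integral_ofReal_mul_cexp_mul_cexp a).unique
    ((hasSum_ofReal.mpr (hasSum_integral_exp_neg_sub_one_div a)).mul_left _)

/-- For every real `a ≥ 0`,
`∫_{−π}^{π} θ · exp(a e^{iθ}) dθ = −2πi ∫_0^a ((e^{−w} − 1)/w) dw`. -/
theorem integral_theta_mul_exp_mul_exp_I (a : ℝ) (ha : 0 ≤ a) :
    ∫ θ in (-Real.pi)..Real.pi, (θ : ℂ) * Complex.exp ((a : ℂ) * Complex.exp (θ * Complex.I))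
      = -2 * (Real.pi : ℂ) * Complex.I *
          ((∫ w in (0 : ℝ)..a, (Real.exp (-w) - 1) / w : ℝ) : ℂ) :=
  integral_theta_mul_exp_mul_exp_I_general a
end

section
/- Let ε > 0. Let q : ℕ_{≥1} → ℝ be completely multiplicative (q_{mn} = q_m q_n for all m, n, and q_1 = 1) with 0 ≤ q_p < 1 for every prime p and q_p = 0 for all but finitely many primes p. Let (a_k)_{k ≥ 1} be nonnegative reals with Σ_{k≥1} a_k < ∞. Then the integral I_1 = ∫_ℝ (Σ_{k≥1} a_k k^{−it}) · |Σ_{n≥1} q_n n^{it}|^2 · e^{−ε^2 t^2} dt is a real number and satisfies I_1 ≥ (Σ_{k≥1} a_k q_k) · ∫_ℝ |Σ_{n≥1} q_n n^{it}|^2 e^{−ε^2 t^2} dt. -/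
/-!
Expanding the product, `I₁ = ∑_{k,m,n} a_k q_m q_n ĝ(log m - log k - log n)`, where
`ĝ(x) = √π / ε · exp (-x² / 4ε²)` is the Fourier transform of the weight `exp (-ε² t²)`; this is
a series of nonnegative reals, so `I₁` is real. Keeping only the terms with `m = k m'`, complete
multiplicativity turns them into `a_k q_k · q_{m'} q_n ĝ(log m' - log n)`, and these sum to
`(∑ a_k q_k) · ∫ |R|² exp (-ε² t²)`. The series `∑ q_n` converges by the Euler product over the
finitely many primes where `q` does not vanish.
-/

open Complex MeasureTheory Real ComplexConjugate

noncomputable section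

variable {ι κ : Type*}

def expSum (c x : ι → ℝ) (t : ℝ) : ℂ := ∑' i, (c i : ℂ) * cexp (I * x i * t)

lemma norm_cexp_I_mul_mul (x t : ℝ) : ‖cexp (I * x * t)‖ = 1 := by
  rw [show I * x * t = ((x * t : ℝ) : ℂ) * I by push_cast; ring, norm_exp_ofReal_mul_I]

lemma summable_norm_expSum_term {c : ι → ℝ} (hc : Summable c) (x : ι → ℝ) (t : ℝ) :
    Summable fun i => ‖(c i : ℂ) * cexp (I * x i * t)‖ := by
  simpa [norm_cexp_I_mul_mul] using hc.abs

lemma expSum_mul_expSum {c x : ι → ℝ} {d y : κ → ℝ} (hc : Summable c) (hd : Summable d)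
    (t : ℝ) :
    expSum c x t * expSum d y t =
      expSum (fun p : ι × κ => c p.1 * d p.2) (fun p => x p.1 + y p.2) t := by
  rw [expSum, expSum, tsum_mul_tsum_of_summable_norm (summable_norm_expSum_term hc x t)
    (summable_norm_expSum_term hd y t)]
  refine tsum_congr fun p => ?_
  push_cast
  rw [mul_add, add_mul, Complex.exp_add]
  ring

lemma conj_expSum (c x : ι → ℝ) (t : ℝ) : conj (expSum c x t) = expSum c (-x) t := by
  rw [expSum, conj_tsum]
  refine tsum_congr fun i => ?_
  rw [map_mul, conj_ofReal, ← Complex.exp_conj]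
  simp

lemma sq_norm_expSum {c : ι → ℝ} (hc : Summable c) (x : ι → ℝ) (t : ℝ) :
    (‖expSum c x t‖ : ℂ) ^ 2 =
      expSum (fun p : ι × ι => c p.1 * c p.2) (fun p => x p.1 - x p.2) t := by
  rw [← mul_conj', conj_expSum, expSum_mul_expSum hc hc]
  rfl

def gaussianFourier (ε x : ℝ) : ℝ := √(π / ε ^ 2) * rexp (-(x ^ 2 / (4 * ε ^ 2)))

lemma gaussianFourier_nonneg (ε x : ℝ) : 0 ≤ gaussianFourier ε x := by
  unfold gaussianFourier
  positivity

section Gaussian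

variable {ε : ℝ}

lemma integral_cexp_mul_gaussian (hε : 0 < ε) (x : ℝ) :
    ∫ t : ℝ, cexp (I * x * t) * rexp (-(ε ^ 2 * t ^ 2)) = gaussianFourier ε x := by
  have hb : 0 < ((ε : ℂ) ^ 2).re := by
    rw [← ofReal_pow, ofReal_re]
    positivity
  have hgauss (t : ℝ) : (rexp (-(ε ^ 2 * t ^ 2)) : ℂ) = cexp (-(ε : ℂ) ^ 2 * t ^ 2) := by
    push_cast
    ring_nf
  simp_rw [hgauss]
  rw [fourierIntegral_gaussian hb, gaussianFourier,
    show -(x : ℂ) ^ 2 / (4 * (ε : ℂ) ^ 2) = ((-(x ^ 2 / (4 * ε ^ 2)) : ℝ) : ℂ) by push_cast; ring,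
    show (π : ℂ) / (ε : ℂ) ^ 2 = ((π / ε ^ 2 : ℝ) : ℂ) by push_cast; ring,
    show (1 / 2 : ℂ) = ((1 / 2 : ℝ) : ℂ) by norm_num, ← ofReal_cpow (by positivity),
    ← Real.sqrt_eq_rpow, ← ofReal_exp, ← ofReal_mul]

lemma norm_cexp_mul_gaussian (x t : ℝ) :
    ‖cexp (I * x * t) * rexp (-(ε ^ 2 * t ^ 2))‖ = rexp (-(ε ^ 2 * t ^ 2)) := by
  rw [norm_mul, norm_cexp_I_mul_mul, one_mul, norm_real, Real.norm_of_nonneg (exp_pos _).le]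

lemma integrable_gaussian (hε : 0 < ε) : Integrable fun t : ℝ => rexp (-(ε ^ 2 * t ^ 2)) := by
  simpa only [neg_mul] using integrable_exp_neg_mul_sq (pow_pos hε 2)

lemma integrable_cexp_mul_gaussian (hε : 0 < ε) (x : ℝ) :
    Integrable fun t : ℝ => cexp (I * x * t) * rexp (-(ε ^ 2 * t ^ 2)) :=
  (integrable_gaussian hε).mono' (by fun_prop) (.of_forall fun t => (norm_cexp_mul_gaussian x t).le)

lemma hasSum_integral_expSum_mul_gaussian [Countable ι] {c : ι → ℝ} (hc : Summable c)
    (x : ι → ℝ) (hε : 0 < ε) :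
    HasSum (fun i => ((c i * gaussianFourier ε (x i) : ℝ) : ℂ))
      (∫ t : ℝ, expSum c x t * rexp (-(ε ^ 2 * t ^ 2))) := by
  have hint (i : ι) :
      Integrable fun t : ℝ => (c i : ℂ) * (cexp (I * x i * t) * rexp (-(ε ^ 2 * t ^ 2))) :=
    (integrable_cexp_mul_gaussian hε (x i)).const_mul _
  have hnorm : Summable fun i =>
      ∫ t : ℝ, ‖(c i : ℂ) * (cexp (I * x i * t) * rexp (-(ε ^ 2 * t ^ 2)))‖ := by
    simp_rw [norm_mul, norm_cexp_I_mul_mul, one_mul, norm_real, integral_const_mul]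
    exact hc.norm.mul_right _
  have := hasSum_integral_of_summable_integral_norm hint hnorm
  simp_rw [integral_const_mul, integral_cexp_mul_gaussian hε, ← mul_assoc, tsum_mul_right] at this
  simpa [expSum] using this

lemma im_integral_expSum_mul_gaussian_eq_zero_and_hasSum [Countable ι] {c : ι → ℝ}
    (hc : Summable c) (x : ι → ℝ) (hε : 0 < ε) :
    (∫ t : ℝ, expSum c x t * rexp (-(ε ^ 2 * t ^ 2))).im = 0 ∧
      HasSum (fun i => c i * gaussianFourier ε (x i))
        (∫ t : ℝ, expSum c x t * rexp (-(ε ^ 2 * t ^ 2))).re := by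
  obtain ⟨hre, him⟩ := (Complex.hasSum_iff _ _).mp (hasSum_integral_expSum_mul_gaussian hc x hε)
  simp only [ofReal_re, ofReal_im] at hre him
  exact ⟨him.unique hasSum_zero, hre⟩

lemma hasSum_integral_sq_norm_expSum_mul_gaussian [Countable ι] {c : ι → ℝ}
    (hc : Summable c) (x : ι → ℝ) (hε : 0 < ε) :
    HasSum (fun p : ι × ι => c p.1 * c p.2 * gaussianFourier ε (x p.1 - x p.2))
      (∫ t : ℝ, ‖expSum c x t‖ ^ 2 * rexp (-(ε ^ 2 * t ^ 2))) := by
  have hcc : Summable fun p : ι × ι => c p.1 * c p.2 := summable_mul_of_summable_norm hc.norm hc.norm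
  convert (im_integral_expSum_mul_gaussian_eq_zero_and_hasSum hcc (fun p => x p.1 - x p.2) hε).2
    using 1
  simp_rw [← sq_norm_expSum hc, ← ofReal_pow, ← ofReal_mul, integral_complex_ofReal, ofReal_re]

end Gaussian

lemma natCast_succ_cpow (n : ℕ) (z : ℂ) :
    ((n + 1 : ℕ) : ℂ) ^ z = cexp (z * Real.log (n + 1)) := by
  rw [cpow_def_of_ne_zero (Nat.cast_ne_zero.mpr n.succ_ne_zero), mul_comm, ← Nat.cast_succ,
    ← natCast_log, Nat.cast_succ]

def extendByZeroHom {R : Type*} [MonoidWithZero R] (q : ℕ → R) (hq1 : q 1 = 1)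
    (hqmul : ∀ m n : ℕ, 1 ≤ m → 1 ≤ n → q (m * n) = q m * q n) : ℕ →*₀ R where
  toFun n := if n = 0 then 0 else q n
  map_zero' := if_pos rfl
  map_one' := by simp [hq1]
  map_mul' m n := by
    rcases eq_or_ne m 0 with rfl | hm
    · simp
    rcases eq_or_ne n 0 with rfl | hn
    · simp
    simp only [mul_eq_zero, hm, hn, or_self, if_false]
    exact hqmul m n (Nat.one_le_iff_ne_zero.mpr hm) (Nat.one_le_iff_ne_zero.mpr hn)

lemma extendByZeroHom_apply_of_ne_zero {R : Type*} [MonoidWithZero R] {q : ℕ → R}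
    (hq1 : q 1 = 1) (hqmul : ∀ m n : ℕ, 1 ≤ m → 1 ≤ n → q (m * n) = q m * q n) {n : ℕ}
    (hn : n ≠ 0) : extendByZeroHom q hq1 hqmul n = q n :=
  if_neg hn

namespace MonoidWithZeroHom

lemma nonneg_of_nonneg_prime {R : Type*} [Semiring R] [PartialOrder R] [IsOrderedRing R]
    (f : ℕ →*₀ R) (hf : ∀ p : ℕ, p.Prime → 0 ≤ f p) (n : ℕ) : 0 ≤ f n := by
  induction n using Nat.recOnMul with
  | zero => simp
  | one => simp
  | prime p hp => exact hf p hp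
  | mul a b ha hb => rw [map_mul]; exact mul_nonneg ha hb

lemma summable_norm_of_finite_support_primes {F : Type*} [NormedField F] [CompleteSpace F]
    (f : ℕ →*₀ F) (hlt : ∀ p : ℕ, p.Prime → ‖f p‖ < 1)
    (hfin : {p : ℕ | p.Prime ∧ f p ≠ 0}.Finite) : Summable (‖f ·‖) := by
  have hsupp : Function.support (‖f ·‖) ⊆ Nat.factoredNumbers hfin.toFinset := by
    intro n hn
    refine Nat.mem_factoredNumbers'.mpr fun p hp hpn => ?_
    obtain ⟨k, rfl⟩ := hpn
    simp only [Function.mem_support, norm_ne_zero_iff, map_mul, mul_ne_zero_iff] at hn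
    exact hfin.mem_toFinset.mpr ⟨hp, hn.1⟩
  have := (EulerProduct.summable_and_hasSum_factoredNumbers_prod_filter_prime_geometric
    (f := (f : ℕ →* F)) (fun hp => hlt _ hp) hfin.toFinset).1
  exact (hasSum_subtype_iff_of_support_subset hsupp).mp this.hasSum |>.summable

end MonoidWithZeroHom

lemma nonneg_of_completelyMultiplicative {q : ℕ → ℝ} (hq1 : q 1 = 1)
    (hqmul : ∀ m n : ℕ, 1 ≤ m → 1 ≤ n → q (m * n) = q m * q n)
    (hqp : ∀ p : ℕ, p.Prime → 0 ≤ q p) {n : ℕ} (hn : n ≠ 0) : 0 ≤ q n := by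
  have hQ {n : ℕ} (hn : n ≠ 0) := extendByZeroHom_apply_of_ne_zero hq1 hqmul hn
  rw [← hQ hn]
  exact (extendByZeroHom q hq1 hqmul).nonneg_of_nonneg_prime
    (fun p hp => (hQ hp.ne_zero).symm ▸ hqp p hp) n

lemma summable_succ_of_completelyMultiplicative {q : ℕ → ℝ} (hq1 : q 1 = 1)
    (hqmul : ∀ m n : ℕ, 1 ≤ m → 1 ≤ n → q (m * n) = q m * q n)
    (hqp : ∀ p : ℕ, p.Prime → |q p| < 1) (hqfin : {p : ℕ | p.Prime ∧ q p ≠ 0}.Finite) :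
    Summable fun n => q (n + 1) := by
  set Q := extendByZeroHom q hq1 hqmul
  have hQ {n : ℕ} (hn : n ≠ 0) : Q n = q n := extendByZeroHom_apply_of_ne_zero hq1 hqmul hn
  have hQsum := (Q.summable_norm_of_finite_support_primes
    (fun p hp => by rw [hQ hp.ne_zero, Real.norm_eq_abs]; exact hqp p hp)
    (hqfin.subset fun p ⟨hp, hqp0⟩ => ⟨hp, hQ hp.ne_zero ▸ hqp0⟩)).of_norm
  exact ((summable_nat_add_iff 1).mpr hQsum).congr fun n => hQ n.succ_ne_zero

/-- Index `n` stands for the positive integer `n + 1`, so `k * m + k + m` stands for the product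
of `k + 1` and `m + 1`. -/
lemma tsum_mul_le_of_hasSum_of_multiplicative {c b ℓ : ℕ → ℝ} {G : ℝ → ℝ} {I J : ℝ}
    (hc0 : ∀ k, 0 ≤ c k) (hb0 : ∀ n, 0 ≤ b n) (hG : ∀ x, 0 ≤ G x)
    (hc : Summable c) (hb : Summable b)
    (hbmul : ∀ k m, b (k * m + k + m) = b k * b m) (hℓ : ∀ k m, ℓ (k * m + k + m) = ℓ k + ℓ m)
    (hI : HasSum (fun p : ℕ × ℕ × ℕ =>
      c p.1 * (b p.2.1 * b p.2.2) * G (-ℓ p.1 + (ℓ p.2.1 - ℓ p.2.2))) I)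
    (hJ : HasSum (fun p : ℕ × ℕ => b p.1 * b p.2 * G (ℓ p.1 - ℓ p.2)) J) :
    (∑' k, c k * b k) * J ≤ I := by
  have hcb : Summable fun k => c k * b k :=
    .of_nonneg_of_le (fun k => mul_nonneg (hc0 k) (hb0 k))
      (fun k => mul_le_mul_of_nonneg_left (hb.le_tsum k fun j _ => hb0 j) (hc0 k)) (hc.mul_right _)
  let i : ℕ × ℕ × ℕ → ℕ × ℕ × ℕ := fun p => (p.1, p.1 * p.2.1 + p.1 + p.2.1, p.2.2)
  have hi : Function.Injective i := by
    rintro ⟨k, m, n⟩ ⟨k', m', n'⟩ h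
    simp only [i, Prod.mk.injEq] at h
    obtain ⟨rfl, hm, rfl⟩ := h
    have : (k + 1) * m = (k + 1) * m' := by linarith
    simp [Nat.eq_of_mul_eq_mul_left k.succ_pos this]
  rw [← hJ.tsum_eq, tsum_mul_tsum_of_summable_norm hcb.norm hJ.summable.norm, ← hI.tsum_eq]
  refine hcb.mul_of_nonneg hJ.summable ?_ ?_ |>.tsum_le_tsum_of_inj i hi ?_ ?_ hI.summable
  · exact fun k => mul_nonneg (hc0 k) (hb0 k)
  · exact fun p => mul_nonneg (mul_nonneg (hb0 _) (hb0 _)) (hG _)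
  · exact fun p _ => mul_nonneg (mul_nonneg (hc0 _) (mul_nonneg (hb0 _) (hb0 _))) (hG _)
  · rintro ⟨k, m, n⟩
    simp only [i, hbmul, hℓ]
    rw [neg_add_eq_sub, add_sub_assoc, add_sub_cancel_left]
    exact le_of_eq (by ring)

/-- **Resonance lower bound (positivity step).**
Let `ε > 0`.  Let `q : ℕ → ℝ` (indexed by positive integers) be completely multiplicative
(`q (m n) = q m · q n` for all `m, n ≥ 1`, `q 1 = 1`) with `0 ≤ q p < 1` for every prime `p` and
`q p = 0` for all but finitely many primes `p`.  Let `(a_k)_{k ≥ 1}` be nonnegative reals with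
`Σ_{k ≥ 1} a_k < ∞`.  Then the integral
`I₁ = ∫_ℝ (Σ_{k≥1} a_k k^{−it}) · |Σ_{n≥1} q_n n^{it}|² · e^{−ε² t²} dt`
is a real number and satisfies
`I₁ ≥ (Σ_{k≥1} a_k q_k) · ∫_ℝ |Σ_{n≥1} q_n n^{it}|² e^{−ε² t²} dt`. -/
theorem resonance_integral_lower_bound
    (ε : ℝ) (hε : 0 < ε) (q : ℕ → ℝ) (a : ℕ → ℝ)
    (hq1 : q 1 = 1)
    (hqmul : ∀ m n : ℕ, 1 ≤ m → 1 ≤ n → q (m * n) = q m * q n)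
    (hqp : ∀ p : ℕ, p.Prime → 0 ≤ q p ∧ q p < 1)
    (hqfin : {p : ℕ | p.Prime ∧ q p ≠ 0}.Finite)
    (hann : ∀ n : ℕ, 1 ≤ n → 0 ≤ a n)
    (hasum : Summable fun n : ℕ => a (n + 1)) :
    (∫ t : ℝ,
        (∑' n : ℕ, (a (n + 1) : ℂ) * ((n + 1 : ℕ) : ℂ) ^ (-(Complex.I * (t : ℂ)))) *
          ((‖∑' n : ℕ, (q (n + 1) : ℂ) * ((n + 1 : ℕ) : ℂ) ^ (Complex.I * (t : ℂ))‖ : ℝ) : ℂ) ^ 2 *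
          ((Real.exp (-(ε ^ 2 * t ^ 2)) : ℝ) : ℂ)).im = 0
    ∧ (∑' n : ℕ, a (n + 1) * q (n + 1)) *
        (∫ t : ℝ,
          (‖∑' n : ℕ, (q (n + 1) : ℂ) * ((n + 1 : ℕ) : ℂ) ^ (Complex.I * (t : ℂ))‖) ^ 2 *
            Real.exp (-(ε ^ 2 * t ^ 2)))
      ≤ (∫ t : ℝ,
          (∑' n : ℕ, (a (n + 1) : ℂ) * ((n + 1 : ℕ) : ℂ) ^ (-(Complex.I * (t : ℂ)))) *
            ((‖∑' n : ℕ, (q (n + 1) : ℂ) * ((n + 1 : ℕ) : ℂ) ^ (Complex.I * (t : ℂ))‖ : ℝ) : ℂ) ^ 2 *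
            ((Real.exp (-(ε ^ 2 * t ^ 2)) : ℝ) : ℂ)).re := by
  have hb0 (n : ℕ) : 0 ≤ q (n + 1) :=
    nonneg_of_completelyMultiplicative hq1 hqmul (fun p hp => (hqp p hp).1) n.succ_ne_zero
  have hb : Summable fun n => q (n + 1) := summable_succ_of_completelyMultiplicative hq1 hqmul
    (fun p hp => (abs_of_nonneg (hqp p hp).1).symm ▸ (hqp p hp).2) hqfin
  have hbmul (k m : ℕ) : q (k * m + k + m + 1) = q (k + 1) * q (m + 1) := by
    rw [show k * m + k + m + 1 = (k + 1) * (m + 1) by ring]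
    exact hqmul _ _ k.succ_pos m.succ_pos
  have hlog (k m : ℕ) : Real.log ((k * m + k + m : ℕ) + 1) = Real.log (k + 1) + Real.log (m + 1) := by
    rw [show ((k * m + k + m : ℕ) : ℝ) + 1 = (k + 1) * (m + 1) by push_cast; ring]
    exact Real.log_mul (by positivity) (by positivity)
  have hA (t : ℝ) : ∑' n : ℕ, (a (n + 1) : ℂ) * ((n + 1 : ℕ) : ℂ) ^ (-(Complex.I * (t : ℂ))) =
      expSum (fun n => a (n + 1)) (fun n => -Real.log (n + 1)) t :=
    tsum_congr fun n => by rw [natCast_succ_cpow]; congr 2; push_cast; ring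
  have hR (t : ℝ) : ∑' n : ℕ, (q (n + 1) : ℂ) * ((n + 1 : ℕ) : ℂ) ^ (Complex.I * (t : ℂ)) =
      expSum (fun n => q (n + 1)) (fun n => Real.log (n + 1)) t :=
    tsum_congr fun n => by rw [natCast_succ_cpow]; congr 2; ring
  have hbb : Summable fun p : ℕ × ℕ => q (p.1 + 1) * q (p.2 + 1) := hb.mul_of_nonneg hb hb0 hb0
  have hcbb : Summable fun p : ℕ × ℕ × ℕ => a (p.1 + 1) * (q (p.2.1 + 1) * q (p.2.2 + 1)) :=
    hasum.mul_of_nonneg hbb (fun k => hann _ k.succ_pos) fun p => mul_nonneg (hb0 _) (hb0 _)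
  simp_rw [hA, hR, sq_norm_expSum hb, expSum_mul_expSum hasum hbb]
  obtain ⟨him, hI⟩ := im_integral_expSum_mul_gaussian_eq_zero_and_hasSum hcbb
    (fun p => -Real.log (p.1 + 1) + (Real.log (p.2.1 + 1) - Real.log (p.2.2 + 1))) hε
  have hJ := hasSum_integral_sq_norm_expSum_mul_gaussian hb (fun n => Real.log (n + 1)) hε
  have key := tsum_mul_le_of_hasSum_of_multiplicative (c := fun n => a (n + 1))
    (b := fun n => q (n + 1)) (ℓ := fun n => Real.log (n + 1)) (fun k => hann _ k.succ_pos) hb0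
    (gaussianFourier_nonneg ε) hasum hb hbmul hlog hI hJ
  exact ⟨him, key⟩
end
end

section
/- There is a constant C depending only on k such that for all X ≥ 3 the following holds: if for each prime p ≤ X we are given complex numbers α_1(p), …, α_k(p) with |α_j(p)| ≤ 1, and we set q_p = 1 − p/X, then |∏_{p ≤ X} ∏_{j=1}^k (p − α_j(p))/(p − α_j(p) q_p) − 1| ≤ C / log X. -/
/-!
Each factor differs from `1` by `-α (p/X) / (p - α q_p)`, of norm at most `(p/X)/(p - 1) ≤ 2/X`.
A product of `n` factors each within `ε` of `1` is within `exp (n ε) - 1` of `1`, and by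
Chebyshev's bound there are `k π(X) ≤ 5 k X / log X` factors, so the distance is at most
`exp (10 k / log X) - 1 ≤ 10 k e^{10 k} / log X`.
-/

open Finset Real

lemma Finset.norm_prod_sub_one_le_exp {ι R : Type*} [NormedCommRing R] [NormOneClass R]
    (s : Finset ι) {f : ι → R} {ε : ℝ} (hf : ∀ i ∈ s, ‖f i - 1‖ ≤ ε) :
    ‖∏ i ∈ s, f i - 1‖ ≤ exp (#s * ε) - 1 :=
  calc ‖∏ i ∈ s, f i - 1‖ = ‖∏ i ∈ s, (1 + (f i - 1)) - 1‖ := by simp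
    _ ≤ exp (∑ i ∈ s, ‖f i - 1‖) - 1 := s.norm_prod_one_add_sub_one_le _
    _ ≤ exp (#s * ε) - 1 := by
      gcongr
      simpa using s.sum_le_card_nsmul _ ε hf

lemma Real.exp_sub_one_le_mul_exp (t : ℝ) : exp t - 1 ≤ t * exp t := by
  have h := mul_le_mul_of_nonneg_right (add_one_le_exp (-t)) (exp_pos t).le
  rw [← exp_add, neg_add_cancel, exp_zero] at h
  linarith

lemma norm_div_sub_mul_sub_one_le {p q : ℝ} (hp : 1 < p) (hq₀ : 0 ≤ q) (hq₁ : q ≤ 1) {a : ℂ}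
    (ha : ‖a‖ ≤ 1) : ‖(p - a) / (p - a * q) - 1‖ ≤ (1 - q) / (p - 1) := by
  have hden : p - 1 ≤ ‖(p : ℂ) - a * q‖ := by
    have haq : ‖a * q‖ ≤ 1 := by
      rw [norm_mul, Complex.norm_real, Real.norm_of_nonneg hq₀]
      nlinarith [norm_nonneg a]
    have := norm_sub_norm_le (p : ℂ) (a * q)
    rw [Complex.norm_real, Real.norm_of_nonneg (by linarith)] at this
    linarith
  have hne : (p : ℂ) - a * q ≠ 0 := norm_pos_iff.mp (by linarith)
  have hnum : ‖a * (q - 1)‖ ≤ 1 - q := by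
    rw [norm_mul, ← Complex.ofReal_one, ← Complex.ofReal_sub, Complex.norm_real,
      Real.norm_of_nonpos (by linarith)]
    nlinarith [norm_nonneg a]
  calc ‖(p - a) / (p - a * q) - 1‖ = ‖a * (q - 1)‖ / ‖(p : ℂ) - a * q‖ := by
        rw [div_sub_one hne, ← norm_div]; ring_nf
    _ ≤ (1 - q) / (p - 1) := div_le_div₀ (by linarith) hnum (by linarith) hden

lemma norm_tilted_factor_sub_one_le {X p : ℝ} (hp : 2 ≤ p) (hpX : p ≤ X) {a : ℂ}
    (ha : ‖a‖ ≤ 1) : ‖(p - a) / (p - a * ((1 - p / X : ℝ) : ℂ)) - 1‖ ≤ 2 / X := by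
  have hX : 0 < X := by linarith
  refine (norm_div_sub_mul_sub_one_le (by linarith) ?_ ?_ ha).trans ?_
  · rw [sub_nonneg, div_le_one hX]; exact hpX
  · have : 0 ≤ p / X := by positivity
    linarith
  · rw [sub_sub_cancel, div_div, div_le_div_iff₀ (by nlinarith) hX]
    nlinarith

lemma primeCounting_floor_le {x : ℝ} (hx : 1 < x) :
    (Nat.primeCounting ⌊x⌋₊ : ℝ) ≤ 5 * x / log x := by
  have hlog : 0 < log x := log_pos hx
  have hsqrt : √x ≤ 2 * x / log x := by
    have := log_le_sub_one_of_pos (sqrt_pos.mpr (by linarith : 0 < x))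
    rw [log_sqrt (by linarith)] at this
    rw [le_div_iff₀ hlog]
    nlinarith [mul_self_sqrt (by linarith : 0 ≤ x), sqrt_nonneg x]
  have hlog4_term : log 4 * x / log √x ≤ 3 * x / log x := by
    rw [log_sqrt (by linarith), div_div_eq_mul_div, div_le_div_iff_of_pos_right hlog]
    nlinarith [log_four_eq, log_two_lt_d9]
  calc (Nat.primeCounting ⌊x⌋₊ : ℝ) ≤ log 4 * x / log √x + √x :=
        Chebyshev.pi_le_log4_mul_div hx
    _ ≤ 3 * x / log x + 2 * x / log x := add_le_add hlog4_term hsqrt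
    _ = 5 * x / log x := by ring

/-- **Comparing the tilted and untilted Euler factors.**
There is a constant `C > 0` depending only on `k` such that for all `X ≥ 3` the following holds:
if for each prime `p ≤ X` we are given complex numbers `α_1(p), …, α_k(p)` of modulus at most
`1`, and we set `q_p = 1 − p/X`, then
`|∏_{p ≤ X} ∏_{j=1}^k (p − α_j(p))/(p − α_j(p) q_p) − 1| ≤ C / log X`. -/
theorem tilted_euler_factor_comparison (k : ℕ) (hk : 1 ≤ k) :
    ∃ C > (0 : ℝ), ∀ X : ℝ, 3 ≤ X → ∀ α : ℕ → Fin k → ℂ,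
      (∀ p ∈ Nat.primesBelow (⌊X⌋₊ + 1), ∀ j : Fin k, ‖α p j‖ ≤ 1) →
      ‖(∏ p ∈ Nat.primesBelow (⌊X⌋₊ + 1), ∏ j : Fin k,
              ((p : ℂ) - α p j) / ((p : ℂ) - α p j * ((1 - (p : ℝ) / X : ℝ) : ℂ))) - 1‖
        ≤ C / Real.log X := by
  have hk₀ : (0 : ℝ) < k := by exact_mod_cast hk
  refine ⟨10 * k * exp (10 * k), by positivity, fun X hX α hα => ?_⟩
  have hlog : 1 ≤ log X := by
    rw [le_log_iff_exp_le (by linarith)]; linarith [exp_one_lt_d9]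
  set S := Nat.primesBelow (⌊X⌋₊ + 1)
  have hfactor : ∀ pj ∈ S ×ˢ (univ : Finset (Fin k)),
      ‖((pj.1 : ℂ) - α pj.1 pj.2) / ((pj.1 : ℂ) - α pj.1 pj.2 * ((1 - (pj.1 : ℝ) / X : ℝ) : ℂ))
        - 1‖ ≤ 2 / X := by
    rintro ⟨p, j⟩ hpj
    have hp : p ∈ S := (mem_product.mp hpj).1
    have hpX : (p : ℝ) ≤ X :=
      (Nat.le_floor_iff (by linarith)).mp (Nat.lt_succ_iff.mp (Nat.lt_of_mem_primesBelow hp))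
    have hp₂ : (2 : ℝ) ≤ p := by exact_mod_cast (Nat.prime_of_mem_primesBelow hp).two_le
    exact_mod_cast norm_tilted_factor_sub_one_le hp₂ hpX (hα p hp j)
  have hcount : (#(S ×ˢ (univ : Finset (Fin k))) : ℝ) * (2 / X) ≤ 10 * k / log X := by
    rw [card_product, card_univ, Fintype.card_fin, Nat.cast_mul,
      show #S = Nat.primeCounting ⌊X⌋₊ from Nat.primesLE_card_eq_primeCounting _]
    calc (Nat.primeCounting ⌊X⌋₊ : ℝ) * k * (2 / X) ≤ 5 * X / log X * k * (2 / X) := by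
          gcongr; exact primeCounting_floor_le (by linarith)
      _ = 10 * k / log X := by field_simp; ring
  rw [← prod_product']
  calc _ ≤ exp (#(S ×ˢ (univ : Finset (Fin k))) * (2 / X)) - 1 :=
        norm_prod_sub_one_le_exp _ hfactor
    _ ≤ exp (10 * k / log X) - 1 := by gcongr
    _ ≤ 10 * k / log X * exp (10 * k / log X) := exp_sub_one_le_mul_exp _
    _ ≤ 10 * k / log X * exp (10 * k) := by gcongr; exact div_le_self (by positivity) hlog
    _ = 10 * k * exp (10 * k) / log X := by ring
end
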